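/- arXiv:2110.13049 — 4 statements merged into one kernel-verified Lean document; each statement's English description precedes it below -/
import Mathlib

section
/- If a semimetric space X is sequentially f-compact (every sequence (x_i) with d(x_i,x_j) < ∞ for all i < j has a subsequence that converges with respect to the backward topology), then X is f-complete (every forward Cauchy sequence b-converges to a point of X). -/
open ENNReal

/-- A semimetric on `X`: like a metric but taking values in `[0,∞]` and not
necessarily symmetric. -/
structure Semimetric (X : Type*) where
  d : X → X → ℝ≥0∞
  refl : ∀ x, d x x = 0
  eq_of_d_eq_zero : ∀ x y, d x y = 0 → x = y
  triangle : ∀ x y z, d x y ≤ d x z + d z y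

/-- `(x i)` b-converges to `p`: convergence with respect to the backward topology,
i.e. `d (x i) p → 0`. -/
def BConv {X : Type*} (m : Semimetric X) (x : ℕ → X) (p : X) : Prop :=
  ∀ ε : ℝ≥0∞, 0 < ε → ∃ N : ℕ, ∀ i ≥ N, m.d (x i) p < ε

/-- `(x i)` is forward Cauchy. -/
def FCauchy {X : Type*} (m : Semimetric X) (x : ℕ → X) : Prop :=
  ∀ ε : ℝ≥0∞, 0 < ε → ∃ N : ℕ, ∀ n mm : ℕ, N ≤ n → n ≤ mm → m.d (x n) (x mm) < ε

/-!
A forward Cauchy sequence has finite forward distances from some index on, so sequential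
f-compactness applies to that tail and yields a b-convergent subsequence. Forward Cauchy
control from `x i` to a far-out term of the subsequence, followed by the triangle inequality,
then makes the whole sequence b-converge to the same limit.
-/

namespace FCauchy

variable {X : Type*} {m : Semimetric X} {x : ℕ → X}

theorem exists_forall_d_lt_top (hx : FCauchy m x) :
    ∃ N, ∀ i j, N ≤ i → i ≤ j → m.d (x i) (x j) < ⊤ := by
  obtain ⟨N, hN⟩ := hx 1 one_pos
  exact ⟨N, fun i j hi hij => (hN i j hi hij).trans one_lt_top⟩

theorem bConv_of_bConv_comp (hx : FCauchy m x) {φ : ℕ → ℕ} (hφ : StrictMono φ) {p : X}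
    (hp : BConv m (x ∘ φ) p) : BConv m x p := by
  intro ε hε
  have hε₂ : 0 < ε / 2 := ENNReal.half_pos hε.ne'
  obtain ⟨N, hN⟩ := hx (ε / 2) hε₂
  obtain ⟨K, hK⟩ := hp (ε / 2) hε₂
  refine ⟨N, fun i hi => ?_⟩
  set k := max K i
  calc m.d (x i) p ≤ m.d (x i) (x (φ k)) + m.d (x (φ k)) p := m.triangle _ _ _
    _ < ε / 2 + ε / 2 :=
        ENNReal.add_lt_add (hN i (φ k) hi ((le_max_right K i).trans hφ.le_apply))
          (hK k (le_max_left K i))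
    _ = ε := ENNReal.add_halves ε

end FCauchy

/-- If a semimetric space is sequentially f-compact (every sequence with
`d (x i) (x j) < ∞` for `i < j` has a b-convergent subsequence), then it is
f-complete (every forward Cauchy sequence b-converges). -/
theorem seq_f_compact_implies_f_complete {X : Type*} (m : Semimetric X)
    (hcomp : ∀ x : ℕ → X, (∀ i j : ℕ, i < j → m.d (x i) (x j) < ⊤) →
      ∃ (φ : ℕ → ℕ) (p : X), StrictMono φ ∧ BConv m (fun k => x (φ k)) p) :
    ∀ x : ℕ → X, FCauchy m x → ∃ p : X, BConv m x p := by
  intro x hx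
  obtain ⟨N, hN⟩ := hx.exists_forall_d_lt_top
  obtain ⟨φ, p, hφ, hp⟩ :=
    hcomp (fun k => x (k + N)) fun i j hij => hN _ _ (Nat.le_add_left N i) (by omega)
  exact ⟨p, hx.bConv_of_bConv_comp (φ := fun k => φ k + N) (hφ.add_const N) hp⟩
end

section
/- If a semimetric space X is sequentially b-compact (every sequence (x_i) with d(x_j,x_i) < ∞ for all i < j has a subsequence converging in the forward topology), then X is b-complete (every backward Cauchy sequence f-converges to a point of X). -/
open ENNReal

/-- `(x i)` f-converges to `p`: convergence with respect to the forward topology,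
i.e. `d p (x i) → 0`. -/
def FConv {X : Type*} (m : Semimetric X) (x : ℕ → X) (p : X) : Prop :=
  ∀ ε : ℝ≥0∞, 0 < ε → ∃ N : ℕ, ∀ i ≥ N, m.d p (x i) < ε

/-- `(x i)` is backward Cauchy: `d (x m) (x n) < ε` for all `m ≥ n ≥ N`. -/
def BCauchy {X : Type*} (m : Semimetric X) (x : ℕ → X) : Prop :=
  ∀ ε : ℝ≥0∞, 0 < ε → ∃ N : ℕ, ∀ n mm : ℕ, N ≤ n → n ≤ mm → m.d (x mm) (x n) < ε

/-! A backward Cauchy sequence has a tail of finite backward distances, to which sequential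
b-compactness applies; and, as for Cauchy sequences in a metric space, a forward limit of a
subsequence is a forward limit of the whole sequence, by the triangle inequality
`d p (x i) ≤ d p (x (φ k)) + d (x (φ k)) (x i)` with `φ k ≥ i`. -/

namespace BCauchy

variable {X : Type*} {m : Semimetric X} {x : ℕ → X}

theorem exists_tail_d_lt_top (hx : BCauchy m x) :
    ∃ N, ∀ i j : ℕ, i < j → m.d (x (N + j)) (x (N + i)) < ⊤ := by
  obtain ⟨N, hN⟩ := hx 1 one_pos
  exact ⟨N, fun i j hij => (hN _ _ (Nat.le_add_right N i) (by omega)).trans one_lt_top⟩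

theorem fConv_of_subseq (hx : BCauchy m x) {φ : ℕ → ℕ} (hφ : StrictMono φ) {p : X}
    (hp : FConv m (fun k => x (φ k)) p) : FConv m x p := by
  intro ε hε
  have hε₂ : 0 < ε / 2 := ENNReal.half_pos hε.ne'
  obtain ⟨N, hN⟩ := hx (ε / 2) hε₂
  obtain ⟨K, hK⟩ := hp (ε / 2) hε₂
  refine ⟨N, fun i hi => ?_⟩
  have hiφ : i ≤ φ (max K i) := (le_max_right K i).trans hφ.le_apply
  calc m.d p (x i) ≤ m.d p (x (φ (max K i))) + m.d (x (φ (max K i))) (x i) :=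
        m.triangle _ _ _
    _ < ε / 2 + ε / 2 :=
        ENNReal.add_lt_add (hK _ (le_max_left K i)) (hN i _ hi hiφ)
    _ = ε := ENNReal.add_halves ε

end BCauchy

/-- If a semimetric space is sequentially b-compact (every sequence with
`d (x j) (x i) < ∞` for `i < j` has an f-convergent subsequence), then it is
b-complete (every backward Cauchy sequence f-converges). -/
theorem seq_b_compact_implies_b_complete {X : Type*} (m : Semimetric X)
    (hcomp : ∀ x : ℕ → X, (∀ i j : ℕ, i < j → m.d (x j) (x i) < ⊤) →
      ∃ (φ : ℕ → ℕ) (p : X), StrictMono φ ∧ FConv m (fun k => x (φ k)) p) :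
    ∀ x : ℕ → X, BCauchy m x → ∃ p : X, FConv m x p := by
  intro x hx
  obtain ⟨N, htail⟩ := hx.exists_tail_d_lt_top
  obtain ⟨φ, p, hφ, hp⟩ := hcomp (fun k => x (N + k)) htail
  exact ⟨p, hx.fConv_of_subseq (hφ.const_add N) hp⟩
end

section
/- Let ρ: Y × Y → [0,∞) be a function on a set Y with ρ(η,η) = 0 for all η, and suppose there exists ε' with 1 ≤ ε' < √2 such that ρ(η₁,η₂) ≤ ε' · max{ρ(η₁,η₃), ρ(η₃,η₂)} for all η₁,η₂,η₃ ∈ Y. Define d(η,μ) = inf over finite chains η = η₀, η₁, ..., η_n = μ of Σ_{i=0}^{n-1} ρ(η_i, η_{i+1}). Then (3 − 2ε')·ρ(η,μ) ≤ d(η,μ) ≤ ρ(η,μ) for all η,μ ∈ Y, and d is a pseudo-semimetric (d(η,η)=0 and d satisfies the triangle inequality). -/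
/-!
Splitting a chain at the last point `m` where the partial sum is still at most half the total
leaves a head and a tail (after the step `η_m → η_{m+1}`) of sum at most half each. Two
applications of the quasi-ultrametric inequality, through `η_m` and `η_{m+1}`, then bound
`ρ(η₀, η_n)` by induction, using `ε²/2 ≤ 1` and `ε²(3 - 2ε) ≤ 1` for `1 ≤ ε ≤ √2`.
-/

/-- The chain infimum `d(η,μ)`: the infimum over finite chains
`η = η₀, η₁, …, η_n = μ` of `Σ ρ(η_i, η_{i+1})`. -/
noncomputable def chainInf {Y : Type*} (ρ : Y → Y → ℝ) (η μ : Y) : ℝ :=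
  sInf {y : ℝ | ∃ (n : ℕ) (c : ℕ → Y), c 0 = η ∧ c n = μ ∧
    y = ∑ i ∈ Finset.range n, ρ (c i) (c (i + 1))}

/-- In the induction step `R = ρ(η₀,η_n)`, `A = ρ(η₀,η_m)`, `B = ρ(η_m,η_{m+1})`,
`C = ρ(η_{m+1},η_n)`, `D = ρ(η_m,η_n)` and `S` is the sum along the chain. -/
lemma three_sub_two_mul_le_of_two_steps {ε A B C D R S : ℝ} (hε1 : 1 ≤ ε) (hε2 : ε ^ 2 ≤ 2)
    (hB : 0 ≤ B) (hBS : B ≤ S) (hA : (3 - 2 * ε) * A ≤ S / 2) (hC : (3 - 2 * ε) * C ≤ S / 2)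
    (hR : R ≤ ε * max A D) (hD : D ≤ ε * max B C) :
    (3 - 2 * ε) * R ≤ S := by
  have hpos : 0 ≤ 3 - 2 * ε := by nlinarith
  have hS : 0 ≤ S := hB.trans hBS
  have hcubic : ε ^ 2 * (3 - 2 * ε) ≤ 1 := by nlinarith [sq_nonneg (ε - 1)]
  rcases le_total D A with hDA | hAD
  · rw [max_eq_left hDA] at hR
    calc (3 - 2 * ε) * R ≤ ε * ((3 - 2 * ε) * A) := by nlinarith
      _ ≤ ε * (S / 2) := by gcongr
      _ ≤ S := by nlinarith
  · rw [max_eq_right hAD] at hR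
    have hR' : R ≤ ε ^ 2 * max B C := by nlinarith
    rcases le_total C B with hCB | hBC
    · rw [max_eq_left hCB] at hR'
      calc (3 - 2 * ε) * R ≤ ε ^ 2 * (3 - 2 * ε) * B := by nlinarith
        _ ≤ S := by nlinarith
    · rw [max_eq_right hBC] at hR'
      calc (3 - 2 * ε) * R ≤ ε ^ 2 * ((3 - 2 * ε) * C) := by nlinarith
        _ ≤ ε ^ 2 * (S / 2) := by gcongr
        _ ≤ S := by nlinarith

namespace ChainInf

open Finset Pointwise

variable {Y : Type*} {ρ : Y → Y → ℝ}

def chainSum (ρ : Y → Y → ℝ) (c : ℕ → Y) (n : ℕ) : ℝ :=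
  ∑ i ∈ range n, ρ (c i) (c (i + 1))

def chainSums (ρ : Y → Y → ℝ) (η μ : Y) : Set ℝ :=
  {y | ∃ (n : ℕ) (c : ℕ → Y), c 0 = η ∧ c n = μ ∧ y = chainSum ρ c n}

lemma chainInf_eq_sInf (η μ : Y) : chainInf ρ η μ = sInf (chainSums ρ η μ) := rfl

lemma chainSum_nonneg (hnn : ∀ η μ, 0 ≤ ρ η μ) (c : ℕ → Y) (n : ℕ) : 0 ≤ chainSum ρ c n :=
  sum_nonneg fun _ _ ↦ hnn _ _

lemma chainSum_add (c : ℕ → Y) (m k : ℕ) :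
    chainSum ρ c (m + k) = chainSum ρ c m + chainSum ρ (fun i ↦ c (m + i)) k := by
  simp only [chainSum, sum_range_add, add_assoc]

lemma chainSum_congr {c c' : ℕ → Y} {n : ℕ} (h : ∀ i ≤ n, c i = c' i) :
    chainSum ρ c n = chainSum ρ c' n :=
  sum_congr rfl fun i hi ↦ by
    rw [mem_range] at hi
    rw [h i hi.le, h (i + 1) hi]

lemma exists_halving_split (hnn : ∀ η μ, 0 ≤ ρ η μ) (c : ℕ → Y) (n : ℕ) :
    ∃ m ≤ n, chainSum ρ c m ≤ chainSum ρ c (n + 1) / 2 ∧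
      chainSum ρ (fun i ↦ c (m + 1 + i)) (n - m) ≤ chainSum ρ c (n + 1) / 2 := by
  set S := chainSum ρ c (n + 1)
  let P k := chainSum ρ c k ≤ S / 2
  have hS : 0 ≤ S := chainSum_nonneg hnn c (n + 1)
  have hP0 : P 0 := by simp only [P, chainSum, range_zero, sum_empty]; linarith
  set m := Nat.findGreatest P n
  have hmn : m ≤ n := Nat.findGreatest_le n
  refine ⟨m, hmn, Nat.findGreatest_spec (Nat.zero_le n) hP0, ?_⟩
  have hsplit := chainSum_add (ρ := ρ) c (m + 1) (n - m)
  rw [show m + 1 + (n - m) = n + 1 by omega] at hsplit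
  rcases hmn.lt_or_eq with hlt | heq
  · have hnext : ¬ P (m + 1) := Nat.findGreatest_is_greatest (Nat.lt_succ_self m) hlt
    simp only [P, not_le] at hnext
    linarith
  · simp only [heq, Nat.sub_self, chainSum, range_zero, sum_empty]
    linarith

theorem three_sub_two_mul_le_chainSum (hnn : ∀ η μ, 0 ≤ ρ η μ) (hrefl : ∀ η, ρ η η = 0)
    {ε : ℝ} (hε1 : 1 ≤ ε) (hε2 : ε ^ 2 ≤ 2)
    (hineq : ∀ η₁ η₂ η₃, ρ η₁ η₂ ≤ ε * max (ρ η₁ η₃) (ρ η₃ η₂)) (n : ℕ) (c : ℕ → Y) :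
    (3 - 2 * ε) * ρ (c 0) (c n) ≤ chainSum ρ c n := by
  induction n using Nat.strong_induction_on generalizing c with
  | _ n ih =>
    rcases n with _ | n
    · simp [chainSum, hrefl]
    obtain ⟨m, hmn, hhead, htail⟩ := exists_halving_split hnn c n
    have hend : m + 1 + (n - m) = n + 1 := by omega
    have hdecomp : chainSum ρ c (n + 1) = chainSum ρ c m + ρ (c m) (c (m + 1)) +
        chainSum ρ (fun i ↦ c (m + 1 + i)) (n - m) := by
      rw [← hend, chainSum_add, chainSum_add]
      simp [chainSum]
    have hA := ih m (by omega) c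
    have hC := ih (n - m) (by omega) fun i ↦ c (m + 1 + i)
    simp only [add_zero, hend] at hC
    refine three_sub_two_mul_le_of_two_steps hε1 hε2 (hnn _ _) ?_ (hA.trans hhead) (hC.trans htail)
      (hineq _ _ (c m)) (hineq _ _ (c (m + 1)))
    linarith [chainSum_nonneg hnn c m, chainSum_nonneg hnn (fun i ↦ c (m + 1 + i)) (n - m)]

lemma rho_mem_chainSums (η μ : Y) : ρ η μ ∈ chainSums ρ η μ :=
  ⟨1, fun i ↦ if i = 0 then η else μ, rfl, rfl, by simp [chainSum]⟩

lemma zero_mem_chainSums (η : Y) : (0 : ℝ) ∈ chainSums ρ η η :=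
  ⟨0, fun _ ↦ η, rfl, rfl, rfl⟩

lemma add_mem_chainSums {η ω μ : Y} {y z : ℝ} (hy : y ∈ chainSums ρ η ω)
    (hz : z ∈ chainSums ρ ω μ) : y + z ∈ chainSums ρ η μ := by
  obtain ⟨n₁, c₁, h₁0, h₁n, rfl⟩ := hy
  obtain ⟨n₂, c₂, h₂0, h₂n, rfl⟩ := hz
  let c i := if i ≤ n₁ then c₁ i else c₂ (i - n₁)
  have htail : (fun i ↦ c (n₁ + i)) = c₂ := by
    funext i
    rcases i with _ | i
    · simp [c, h₁n, h₂0]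
    · simp [c, show ¬ n₁ + (i + 1) ≤ n₁ by omega]
  refine ⟨n₁ + n₂, c, by simp [c, h₁0], ?_, ?_⟩
  · simpa [← h₂n] using congrFun htail n₂
  · rw [chainSum_add, htail, chainSum_congr fun i hi ↦ if_pos hi]

lemma nonneg_of_mem_chainSums (hnn : ∀ η μ, 0 ≤ ρ η μ) {η μ : Y} {y : ℝ}
    (hy : y ∈ chainSums ρ η μ) : 0 ≤ y := by
  obtain ⟨n, c, -, -, rfl⟩ := hy
  exact chainSum_nonneg hnn c n

lemma bddBelow_chainSums (hnn : ∀ η μ, 0 ≤ ρ η μ) (η μ : Y) : BddBelow (chainSums ρ η μ) :=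
  ⟨0, fun _ ↦ nonneg_of_mem_chainSums hnn⟩

lemma chainInf_nonneg (hnn : ∀ η μ, 0 ≤ ρ η μ) (η μ : Y) : 0 ≤ chainInf ρ η μ :=
  le_csInf ⟨_, rho_mem_chainSums η μ⟩ fun _ ↦ nonneg_of_mem_chainSums hnn

lemma chainInf_le_of_mem (hnn : ∀ η μ, 0 ≤ ρ η μ) {η μ : Y} {y : ℝ}
    (hy : y ∈ chainSums ρ η μ) : chainInf ρ η μ ≤ y :=
  csInf_le (bddBelow_chainSums hnn η μ) hy

lemma chainInf_triangle (hnn : ∀ η μ, 0 ≤ ρ η μ) (η ω μ : Y) :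
    chainInf ρ η μ ≤ chainInf ρ η ω + chainInf ρ ω μ := by
  simp only [chainInf_eq_sInf]
  rw [← csInf_add ⟨_, rho_mem_chainSums η ω⟩ (bddBelow_chainSums hnn η ω)
    ⟨_, rho_mem_chainSums ω μ⟩ (bddBelow_chainSums hnn ω μ)]
  exact csInf_le_csInf (bddBelow_chainSums hnn η μ)
    (Set.add_nonempty.mpr ⟨⟨_, rho_mem_chainSums η ω⟩, ⟨_, rho_mem_chainSums ω μ⟩⟩)
    (by rintro _ ⟨y, hy, z, hz, rfl⟩; exact add_mem_chainSums hy hz)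

end ChainInf

open ChainInf in
/-- Let `ρ : Y × Y → [0,∞)` satisfy `ρ(η,η) = 0` and
`ρ(η₁,η₂) ≤ ε'·max(ρ(η₁,η₃), ρ(η₃,η₂))` for some `1 ≤ ε' < √2`. Then the chain
infimum `d` satisfies `(3-2ε')·ρ ≤ d ≤ ρ` and is a pseudo-semimetric. -/
theorem chainInf_pseudo_semimetric {Y : Type*} (ρ : Y → Y → ℝ)
    (hnn : ∀ η μ : Y, 0 ≤ ρ η μ) (hrefl : ∀ η : Y, ρ η η = 0)
    (ε' : ℝ) (hε1 : 1 ≤ ε') (hε2 : ε' < Real.sqrt 2)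
    (hineq : ∀ η₁ η₂ η₃ : Y, ρ η₁ η₂ ≤ ε' * max (ρ η₁ η₃) (ρ η₃ η₂)) :
    (∀ η μ : Y, (3 - 2 * ε') * ρ η μ ≤ chainInf ρ η μ ∧ chainInf ρ η μ ≤ ρ η μ) ∧
    (∀ η : Y, chainInf ρ η η = 0) ∧
    (∀ η μ ω : Y, chainInf ρ η μ ≤ chainInf ρ η ω + chainInf ρ ω μ) := by
  have hε2' : ε' ^ 2 ≤ 2 := ((Real.lt_sqrt (by linarith)).mp hε2).le
  refine ⟨fun η μ ↦ ⟨?_, chainInf_le_of_mem hnn (rho_mem_chainSums η μ)⟩,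
    fun η ↦ (chainInf_le_of_mem hnn (zero_mem_chainSums η)).antisymm (chainInf_nonneg hnn η η),
    fun η μ ω ↦ chainInf_triangle hnn η ω μ⟩
  refine le_csInf ⟨_, rho_mem_chainSums η μ⟩ ?_
  rintro _ ⟨n, c, rfl, rfl, rfl⟩
  exact three_sub_two_mul_le_chainSum hnn hrefl hε1 hε2' hineq n c
end

section
/- Let D be a digraph in which every vertex has finite out-degree, and let R_1, R_2 be rays in D. Then there are infinitely many pairwise disjoint directed R_1–R_2 paths if and only if for every vertex x and every R ∈ ℕ there is a directed R_1–R_2 path avoiding the out-ball B_R^+(x). -/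
open ENNReal

variable {V : Type*}

/-- The directed-path semimetric of a digraph. -/
noncomputable def ddist (adj : V → V → Prop) (x y : V) : ℕ∞ :=
  sInf {n : ℕ∞ | ∃ l : List V, List.Chain' adj (x :: l) ∧
    (x :: l).getLast (List.cons_ne_nil x l) = y ∧ n = (l.length : ℕ∞)}

/-- A ray in a digraph: an injective sequence of vertices with an edge from each
vertex to the next. -/
def IsRay (adj : V → V → Prop) (x : ℕ → V) : Prop :=
  Function.Injective x ∧ ∀ i : ℕ, adj (x i) (x (i + 1))

/-- A directed `R₁`–`R₂` path: a nonempty directed walk starting at a vertex of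
`R₁` and ending at a vertex of `R₂`. -/
def IsLinkPath (adj : V → V → Prop) (R₁ R₂ : ℕ → V) (l : List V) : Prop :=
  List.Chain' adj l ∧ (∃ i : ℕ, l.head? = some (R₁ i)) ∧ ∃ j : ℕ, l.getLast? = some (R₂ j)

/-!
Out-balls are finite, so a finite ball can meet only finitely many of a family of pairwise
disjoint paths; this gives one direction. Conversely, every vertex on an `R₁`–`R₂` path is
reachable from `R₁ 0`, so any finite set of such vertices lies in some ball `B_R⁺(R₁ 0)`, and a
path avoiding that ball avoids the set. Choosing each new path to avoid all previously chosen
ones produces infinitely many disjoint paths.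
-/

open Function Relation

section Ddist

variable {adj : V → V → Prop}

theorem ddist_le_length {x : V} {l : List V} (hl : List.IsChain adj (x :: l)) :
    ddist adj x ((x :: l).getLast (List.cons_ne_nil x l)) ≤ l.length :=
  sInf_le ⟨l, hl, rfl, rfl⟩

theorem exists_isChain_of_ddist_le {x v : V} {n : ℕ} (h : ddist adj x v ≤ n) :
    ∃ l : List V, List.IsChain adj (x :: l) ∧
      (x :: l).getLast (List.cons_ne_nil x l) = v ∧ l.length ≤ n := by
  obtain ⟨_, ⟨l, hchain, hlast, rfl⟩, hlt⟩ :=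
    sInf_lt_iff.mp (h.trans_lt (ENat.natCast_lt_natCast.mpr n.lt_succ_self))
  exact ⟨l, hchain, hlast, Nat.lt_succ_iff.mp (by exact_mod_cast hlt)⟩

theorem ddist_ne_top_of_reflTransGen {x v : V} (h : ReflTransGen adj x v) :
    ddist adj x v ≠ ⊤ := by
  obtain ⟨l, hchain, rfl⟩ := List.exists_isChain_cons_of_relationReflTransGen h
  exact ne_top_of_le_ne_top (ENat.natCast_ne_top _) (ddist_le_length hchain)

theorem exists_forall_ddist_le_of_reflTransGen {x : V} (S : Finset V)
    (hS : ∀ v ∈ S, ReflTransGen adj x v) : ∃ R : ℕ, ∀ v ∈ S, ddist adj x v ≤ R := by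
  refine ⟨S.sup fun v => (ddist adj x v).toNat, fun v hv => ?_⟩
  rw [← ENat.natCast_toNat (ddist_ne_top_of_reflTransGen (hS v hv))]
  exact_mod_cast Finset.le_sup (f := fun v => (ddist adj x v).toNat) hv

theorem finite_setOf_ddist_le (hout : ∀ v : V, {w | adj v w}.Finite) (x : V) (R : ℕ) :
    {v : V | ddist adj x v ≤ R}.Finite := by
  induction R generalizing x with
  | zero =>
    refine (Set.finite_singleton x).subset fun v hv => ?_
    obtain ⟨l, -, hlast, hlen⟩ := exists_isChain_of_ddist_le hv
    obtain rfl : l = [] := List.eq_nil_of_length_eq_zero (Nat.le_zero.mp hlen)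
    exact hlast.symm
  | succ R ih =>
    -- a walk of length `R + 1` from `x` is empty or starts with an out-neighbour of `x`
    refine ((Set.finite_singleton x).union ((hout x).biUnion fun w _ => ih w)).subset
      fun v hv => ?_
    obtain ⟨l, hchain, hlast, hlen⟩ := exists_isChain_of_ddist_le hv
    rcases l with _ | ⟨w, t⟩
    · exact Or.inl hlast.symm
    obtain ⟨hxw, hwt⟩ := List.isChain_cons_cons.mp hchain
    refine Or.inr (Set.mem_biUnion hxw ?_)
    have hwv : (w :: t).getLast (List.cons_ne_nil w t) = v := by simpa using hlast
    calc ddist adj w v ≤ t.length := hwv ▸ ddist_le_length hwt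
      _ ≤ R := by exact_mod_cast Nat.succ_le_succ_iff.mp hlen

end Ddist

section Paths

variable {α : Type*}

theorem exists_forall_notMem_of_pairwise_disjoint {F : ℕ → List α}
    (hF : Pairwise (List.Disjoint on F)) {B : Set α} (hB : B.Finite) :
    ∃ n, ∀ v ∈ F n, v ∉ B := by
  by_contra! hmeet
  choose f hfF hfB using hmeet
  have := hB.to_subtype
  obtain ⟨m, n, hmn, hf⟩ := Finite.exists_ne_map_eq_of_infinite fun n => (⟨f n, hfB n⟩ : B)
  have hfmn : f m = f n := congrArg Subtype.val hf
  exact hF hmn (hfF m) (hfmn ▸ hfF n)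

/-- Greedy construction: the `n`-th path avoids the finite set of vertices of all earlier ones. -/
theorem exists_pairwise_disjoint_of_forall_finset_avoid {P : List α → Prop}
    (h : ∀ S : Finset α, (∀ v ∈ S, ∃ l, P l ∧ v ∈ l) → ∃ l, P l ∧ ∀ v ∈ l, v ∉ S) :
    ∃ F : ℕ → List α, (∀ n, P (F n)) ∧ Pairwise (List.Disjoint on F) := by
  classical
  choose pick hpick hpick_avoid using h
  let Covered := {S : Finset α // ∀ v ∈ S, ∃ l, P l ∧ v ∈ l}
  let next (S : Covered) : Covered :=
    ⟨S.1 ∪ (pick S.1 S.2).toFinset, fun v hv => (Finset.mem_union.mp hv).elim (S.2 v)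
      fun hv => ⟨_, hpick S.1 S.2, List.mem_toFinset.mp hv⟩⟩
  let A (n : ℕ) : Covered := Nat.rec ⟨∅, by simp⟩ (fun _ S => next S) n
  have hA_mono : Monotone fun n => (A n).1 :=
    monotone_nat_of_le_succ fun n => Finset.subset_union_left
  let F (n : ℕ) : List α := pick (A n).1 (A n).2
  have hF_lt {m n : ℕ} (hmn : m < n) : List.Disjoint (F m) (F n) := fun v hm hn =>
    hpick_avoid _ _ v hn (hA_mono hmn (Finset.mem_union_right _ (List.mem_toFinset.mpr hm)))
  exact ⟨F, fun n => hpick _ _, fun m n hmn => hmn.lt_or_gt.elim hF_lt fun h => (hF_lt h).symm⟩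

end Paths

theorem IsRay.reflTransGen {adj : V → V → Prop} {R : ℕ → V} (h : IsRay adj R)
    (i : ℕ) : ReflTransGen adj (R 0) (R i) := by
  induction i with
  | zero => exact .refl
  | succ i ih => exact ih.tail (h.2 i)

theorem IsLinkPath.reflTransGen_of_mem {adj : V → V → Prop} {R₁ R₂ : ℕ → V}
    {l : List V} (h₁ : IsRay adj R₁) (hl : IsLinkPath adj R₁ R₂ l) {v : V} (hv : v ∈ l) :
    ReflTransGen adj (R₁ 0) v := by
  obtain ⟨hchain, ⟨i, hi⟩, -⟩ := hl
  refine List.IsChain.induction (ReflTransGen adj (R₁ 0)) l hchain (fun _ _ => flip .tail)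
    (fun hne => ?_) v hv
  rw [List.head?_eq_some_head hne, Option.some_inj] at hi
  exact hi ▸ h₁.reflTransGen i

theorem disjoint_paths_iff_paths_outside_out_balls_general {V : Type*} (adj : V → V → Prop)
    (hout : ∀ v : V, {w | adj v w}.Finite)
    (R₁ R₂ : ℕ → V) (h₁ : IsRay adj R₁) :
    (∃ F : ℕ → List V, (∀ n, IsLinkPath adj R₁ R₂ (F n)) ∧
      ∀ n n', n ≠ n' → ∀ v : V, v ∈ F n → v ∉ F n') ↔
    (∀ (x : V) (R : ℕ), ∃ l : List V, IsLinkPath adj R₁ R₂ l ∧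
      ∀ v ∈ l, ¬ ddist adj x v ≤ (R : ℕ∞)) := by
  constructor
  · rintro ⟨F, hF, hdisj⟩ x R
    obtain ⟨n, hn⟩ := exists_forall_notMem_of_pairwise_disjoint
      (fun n n' hne v => hdisj n n' hne v) (finite_setOf_ddist_le hout x R)
    exact ⟨F n, hF n, hn⟩
  · intro hfar
    have havoid (S : Finset V) (hS : ∀ v ∈ S, ∃ l, IsLinkPath adj R₁ R₂ l ∧ v ∈ l) :
        ∃ l, IsLinkPath adj R₁ R₂ l ∧ ∀ v ∈ l, v ∉ S := by
      obtain ⟨R, hR⟩ := exists_forall_ddist_le_of_reflTransGen S fun v hv =>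
        let ⟨_, hl, hvl⟩ := hS v hv
        hl.reflTransGen_of_mem h₁ hvl
      obtain ⟨l, hl, hlfar⟩ := hfar (R₁ 0) R
      exact ⟨l, hl, fun v hv hvS => hlfar v hv (hR v hvS)⟩
    obtain ⟨F, hF, hdisj⟩ := exists_pairwise_disjoint_of_forall_finset_avoid havoid
    exact ⟨F, hF, fun n n' hne v hv hv' => hdisj hne hv hv'⟩

/-- Let `D` be a digraph in which every vertex has finite out-degree and let
`R₁, R₂` be rays.  Then there are infinitely many pairwise disjoint directed
`R₁`–`R₂` paths if and only if for every vertex `x` and every `R ∈ ℕ` there is a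
directed `R₁`–`R₂` path avoiding the out-ball `B_R⁺(x)`. -/
theorem disjoint_paths_iff_paths_outside_out_balls {V : Type*} (adj : V → V → Prop)
    (hout : ∀ v : V, {w | adj v w}.Finite)
    (R₁ R₂ : ℕ → V) (h₁ : IsRay adj R₁) (h₂ : IsRay adj R₂) :
    (∃ F : ℕ → List V, (∀ n, IsLinkPath adj R₁ R₂ (F n)) ∧
      ∀ n n', n ≠ n' → ∀ v : V, v ∈ F n → v ∉ F n') ↔
    (∀ (x : V) (R : ℕ), ∃ l : List V, IsLinkPath adj R₁ R₂ l ∧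
      ∀ v ∈ l, ¬ ddist adj x v ≤ (R : ℕ∞)) :=
  disjoint_paths_iff_paths_outside_out_balls_general adj hout R₁ R₂ h₁
end
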